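/- arXiv:1212.4742 — 2 statements merged into one kernel-verified Lean document; each statement's English description precedes it below -/
import Mathlib

section
/- E is the unique maximal proper S_0-invariant subgroup of G = Z_2^{*∞}; that is, every proper S_0-invariant subgroup of G is contained in E. -/
/-!
A word of odd length involves only finitely many letters. Identifying all of them with
`gen 0` sends it into `⟨gen 0⟩ = {1, gen 0}` without changing its parity, hence onto `gen 0`
itself. So a subgroup closed under finite identifications of letters that contains an odd word
contains `gen 0`, then by renaming every generator, and is everything.
-/

noncomputable section

abbrev Z2 : Type := Multiplicative (ZMod 2)
abbrev FP : Type := Monoid.CoprodI (fun _ : ℕ => Z2)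

def gen (i : ℕ) : FP := Monoid.CoprodI.of (i := i) (Multiplicative.ofAdd (1 : ZMod 2))

def par : FP →* Z2 := Monoid.CoprodI.lift (fun _ => MonoidHom.id Z2)

/-- The subgroup of even-length words. -/
def Ev : Subgroup FP := par.ker

/-- Endomorphism of `FP` identifying letters according to `f`. -/
def ident (f : ℕ → ℕ) : FP →* FP :=
  Monoid.CoprodI.lift (fun i => (Monoid.CoprodI.of (M := fun _ : ℕ => Z2) (i := f i)))

/-- `f` moves only finitely many letters. -/
def FinSupp (f : ℕ → ℕ) : Prop := ∃ n, ∀ k ≥ n, f k = k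

/-- S₀-invariance. -/
def S0Inv (H : Subgroup FP) : Prop :=
  (∀ f : ℕ → ℕ, FinSupp f → ∀ x ∈ H, ident f x ∈ H) ∧
  (∀ k : ℕ, ∀ x ∈ H, gen k * x * gen k ∈ H)

/-- Length of the reduced word of `x`. -/
def wlen (x : FP) : ℕ := (Monoid.CoprodI.Word.equiv x).toList.length

/-- Number of occurrences of the letter `i` in the reduced word of `x`. -/
def occ (x : FP) (i : ℕ) : ℕ :=
  ((Monoid.CoprodI.Word.equiv x).toList.map Sigma.fst).count i

open Subgroup

lemma Subgroup.mem_closure_singleton_of_mul_self_eq_one {G : Type*} [Group G] {g y : G}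
    (hg : g * g = 1) (hy : y ∈ closure {g}) : y = 1 ∨ y = g := by
  induction hy using closure_induction with
  | mem z hz => exact Or.inr hz
  | one => exact Or.inl rfl
  | mul a b _ _ ha hb => rcases ha with rfl | rfl <;> rcases hb with rfl | rfl <;> simp [hg]
  | inv a _ ha =>
    rcases ha with rfl | rfl
    · simp
    · exact Or.inr (inv_eq_of_mul_eq_one_right hg)

lemma Z2.eq_one_or_eq_ofAdd_one : ∀ m : Z2, m = 1 ∨ m = Multiplicative.ofAdd 1 := by decide

lemma gen_mul_self (i : ℕ) : gen i * gen i = 1 := by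
  rw [gen, ← map_mul, show Multiplicative.ofAdd (1 : ZMod 2) * Multiplicative.ofAdd 1 = 1 by decide,
    map_one]

lemma ident_gen (f : ℕ → ℕ) (i : ℕ) : ident f (gen i) = gen (f i) := by
  simp [ident, gen, Monoid.CoprodI.lift_of]

lemma par_ident (f : ℕ → ℕ) (x : FP) : par (ident f x) = par x := by
  rw [← MonoidHom.comp_apply]
  congr 1
  refine Monoid.CoprodI.ext_hom _ _ fun i => ?_
  ext m
  simp [par, ident, Monoid.CoprodI.lift_of]

lemma par_eq_ofAdd_one_of_notMem_Ev {x : FP} (hx : x ∉ Ev) : par x = Multiplicative.ofAdd 1 :=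
  (Z2.eq_one_or_eq_ofAdd_one _).resolve_left hx

lemma exists_mem_closure_gen_Iio (x : FP) : ∃ N, x ∈ closure (gen '' Set.Iio N) := by
  induction x using Monoid.CoprodI.induction_on with
  | one => exact ⟨0, one_mem _⟩
  | of i m =>
    refine ⟨i + 1, ?_⟩
    rcases Z2.eq_one_or_eq_ofAdd_one m with rfl | rfl
    · rw [map_one]; exact one_mem _
    · exact subset_closure ⟨i, Nat.lt_succ_self i, rfl⟩
  | mul x y hx hy =>
    obtain ⟨M, hxM⟩ := hx
    obtain ⟨N, hyN⟩ := hy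
    have hmono {M N : ℕ} (h : M ≤ N) : closure (gen '' Set.Iio M) ≤ closure (gen '' Set.Iio N) :=
      closure_mono (Set.image_mono (Set.Iio_subset_Iio h))
    exact ⟨max M N, mul_mem (hmono (le_max_left M N) hxM) (hmono (le_max_right M N) hyN)⟩

lemma eq_top_of_forall_gen_mem {H : Subgroup FP} (hH : ∀ k, gen k ∈ H) : H = ⊤ := by
  refine eq_top_iff.2 fun x _ => ?_
  obtain ⟨N, hx⟩ := exists_mem_closure_gen_Iio x
  exact (closure_le H).2 (by rintro _ ⟨k, -, rfl⟩; exact hH k) hx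

section IdentInvariant

variable {H : Subgroup FP} (hH : ∀ f : ℕ → ℕ, FinSupp f → ∀ x ∈ H, ident f x ∈ H)
include hH

lemma gen_zero_mem_of_mem_of_notMem_Ev {x : FP} (hxH : x ∈ H) (hxE : x ∉ Ev) : gen 0 ∈ H := by
  obtain ⟨N, hxN⟩ := exists_mem_closure_gen_Iio x
  let f : ℕ → ℕ := fun i => if i < N then 0 else i
  have hf : FinSupp f := ⟨N, fun k hk => if_neg (Nat.not_lt.2 hk)⟩
  have hfx : ident f x ∈ closure {gen 0} := by
    refine ((MonoidHom.map_closure _ _).trans_le ((closure_le _).2 ?_)) ⟨x, hxN, rfl⟩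
    rintro _ ⟨_, ⟨i, hi, rfl⟩, rfl⟩
    exact subset_closure (by simp [ident_gen, f, Set.mem_Iio.1 hi])
  rcases mem_closure_singleton_of_mul_self_eq_one (gen_mul_self 0) hfx with h | h
  · have hpar := par_ident f x
    rw [h, map_one, par_eq_ofAdd_one_of_notMem_Ev hxE] at hpar
    exact absurd hpar (by decide)
  · exact h ▸ hH f hf x hxH

lemma gen_mem_of_gen_zero_mem (h0 : gen 0 ∈ H) (k : ℕ) : gen k ∈ H := by
  let f : ℕ → ℕ := fun i => if i = 0 then k else i
  have hf : FinSupp f := ⟨1, fun j hj => if_neg (by omega)⟩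
  simpa [ident_gen, f] using hH f hf _ h0

end IdentInvariant

/-- `Ev` is the unique maximal proper S₀-invariant subgroup of `FP`: every proper
S₀-invariant subgroup of `FP` is contained in `Ev`. -/
theorem stmt3 : ∀ H : Subgroup FP, S0Inv H → H ≠ ⊤ → H ≤ Ev := by
  intro H hS hne x hxH
  by_contra hxE
  have h0 := gen_zero_mem_of_mem_of_notMem_Ev hS.1 hxH hxE
  exact hne (eq_top_of_forall_gen_mem (gen_mem_of_gen_zero_mem hS.1 h0))

end
end

section
/- For any S-invariant subgroup H of F_∞ and any element w ∈ H involving only the letters x_1,...,x_n with exponent sums e_1,...,e_n, each power x_i^{e_i} belongs to H. -/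
noncomputable section

abbrev F : Type := FreeGroup ℕ

/-- `f` moves only finitely many letters. -/
def FinSuppF (f : ℕ → ℕ) : Prop := ∃ n, ∀ k ≥ n, f k = k

/-- The endomorphism of `F` identifying letters according to `f`. -/
def identF (f : ℕ → ℕ) : Monoid.End F :=
  (FreeGroup.lift (fun k => FreeGroup.of (f k)) : F →* F)

/-- The endomorphism `x_k ↦ x_i⁻¹ x_k`. -/
def shiftF (i : ℕ) : Monoid.End F :=
  (FreeGroup.lift (fun k => (FreeGroup.of i)⁻¹ * FreeGroup.of k) : F →* F)

/-- The endomorphism deleting the letter `j` (sending `x_j` to `1`). -/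
def delF (j : ℕ) : Monoid.End F :=
  (FreeGroup.lift (fun k => if k = j then 1 else FreeGroup.of k) : F →* F)

/-- The endomorphism `x_k ↦ x_k⁻¹` for all `k`. -/
def invF : Monoid.End F :=
  (FreeGroup.lift (fun k => (FreeGroup.of k)⁻¹) : F →* F)

/-- The generating set of the semigroup `S ⊆ End(F_∞)`: finite identifications of
letters, the maps `x_k ↦ x_i⁻¹ x_k`, deletions of letters, the global inversion
`x_k ↦ x_k⁻¹`, and all inner automorphisms. -/
def SGen : Set (Monoid.End F) :=
  {φ | (∃ f : ℕ → ℕ, FinSuppF f ∧ φ = identF f) ∨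
       (∃ i : ℕ, φ = shiftF i) ∨
       (∃ j : ℕ, φ = delF j) ∨
       φ = invF ∨
       (∃ g : F, φ = ((MulAut.conj g : F ≃* F) : F →* F))}

/-- The semigroup `S` of endomorphisms of `F_∞`. -/
def S : Subsemigroup (Monoid.End F) := Subsemigroup.closure SGen

/-- A subgroup is `S`-invariant if it is preserved by every element of `S`. -/
def SInv (H : Subgroup F) : Prop := ∀ φ ∈ S, ∀ x ∈ H, φ x ∈ H

/-- Exponent sum of the letter `i` in a word of `F`. -/
def expSum (i : ℕ) : F →* Multiplicative ℤ :=
  FreeGroup.lift (fun k => if k = i then Multiplicative.ofAdd (1 : ℤ) else 1)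

/-
Deleting every letter `x_j` with `j < n` other than `x_i` is a finite product of deletions, so
it lies in `S` and maps `H` into itself. On words in `x_0, …, x_{n-1}` it agrees with the
homomorphism `w ↦ x_i ^ e_i(w)`, since both send `x_i` to `x_i` and the other letters to `1`.
-/

def delsF (l : List ℕ) : Monoid.End F := (l.map delF).prod

lemma delF_of (j k : ℕ) :
    delF j (FreeGroup.of k) = if k = j then 1 else FreeGroup.of k :=
  FreeGroup.lift_apply_of

lemma delsF_of (l : List ℕ) (k : ℕ) :
    delsF l (FreeGroup.of k) = if k ∈ l then 1 else FreeGroup.of k := by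
  induction l with
  | nil => simp [delsF]
  | cons a t ih =>
    change delF a (delsF t (FreeGroup.of k)) = _
    rw [ih]
    by_cases hk : k ∈ t
    · simp [hk]
    · by_cases h : k = a
      · subst h
        simp [delF_of, hk]
      · simp [delF_of, h, hk]

lemma delF_mem_S (j : ℕ) : delF j ∈ S :=
  Subsemigroup.subset_closure (Or.inr (Or.inr (Or.inl ⟨j, rfl⟩)))

lemma SInv.delsF_mem {H : Subgroup F} (hH : SInv H) (l : List ℕ) {x : F} (hx : x ∈ H) :
    delsF l x ∈ H := by
  induction l with
  | nil => exact hx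
  | cons a t ih => exact hH (delF a) (delF_mem_S a) _ ih

lemma delsF_eq_zpow_expSum {n : ℕ} (i : ℕ) {v : F}
    (hv : v ∈ Subgroup.closure {g : F | ∃ j < n, g = FreeGroup.of j}) :
    delsF ((List.range n).filter (· ≠ i)) v =
      FreeGroup.of i ^ Multiplicative.toAdd (expSum i v) := by
  let φ : F →* F := delsF ((List.range n).filter (· ≠ i))
  let ψ : F →* F := (zpowersHom F (FreeGroup.of i)).comp (expSum i)
  suffices Subgroup.closure {g : F | ∃ j < n, g = FreeGroup.of j} ≤ φ.eqLocus ψ from this hv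
  rw [Subgroup.closure_le]
  rintro _ ⟨j, hj, rfl⟩
  change delsF _ (FreeGroup.of j) = ψ (FreeGroup.of j)
  rw [delsF_of]
  by_cases hji : j = i
  · subst hji
    simp [ψ, expSum]
  · simp [ψ, expSum, hj, hji]

/-- If `H ≤ F_∞` is `S`-invariant and `w ∈ H` involves only the letters
`x_0, …, x_{n-1}`, then each `x_i ^ (e_i)` lies in `H`, where `e_i` is the exponent
sum of `x_i` in `w`. -/
theorem stmt13 (H : Subgroup F) (hH : SInv H) (n : ℕ) (w : F) (hw : w ∈ H)
    (hsupp : w ∈ Subgroup.closure {g : F | ∃ i < n, g = FreeGroup.of i}) :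
    ∀ i < n, (FreeGroup.of i) ^ (Multiplicative.toAdd (expSum i w)) ∈ H := by
  intro i _
  rw [← delsF_eq_zpow_expSum i hsupp]
  exact hH.delsF_mem _ hw

end
end
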